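/- The systemic Mean-Semideviation measure defined on random vectors X by ρ_s[X] = Σ_{i=1}^m c_i ρ[X_i] + κ Σ_{i=1}^m c_i ( ρ[X_i] − Σ_{j=1}^m c_j ρ[X_j] )_+, where ρ is a coherent scalar risk measure, κ ∈ [0,1], and c ∈ S_m^+, satisfies axioms A1–A4: convexity, componentwise monotonicity, positive homogeneity, and ρ_s[X + aI] = ρ_s[X] + a for all a ∈ R. -/
import Mathlib

open MeasureTheory
open scoped ENNReal

noncomputable def meanSemidevAgg {m : ℕ} (κ : ℝ) (c : Fin m → ℝ) (r : Fin m → ℝ) : ℝ :=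
  ∑ i, c i * r i + κ * ∑ i, c i * max (r i - ∑ j, c j * r j) 0

lemma agg_mono' {m : ℕ} (κ : ℝ) (c r s : Fin m → ℝ)
    (hκ0 : 0 ≤ κ) (hκ1 : κ ≤ 1) (hc : ∀ i, 0 ≤ c i) (hsum : ∑ i, c i = 1)
    (hrs : ∀ i, r i ≤ s i) :
    meanSemidevAgg κ c r ≤ meanSemidevAgg κ c s := by
  set μr := ∑ j, c j * r j with hμr
  set μs := ∑ j, c j * s j with hμs
  set h : Fin m → ℝ := fun i => if μr < r i then 1 else 0 with hh
  have hh0 : ∀ i, 0 ≤ h i := fun i => by simp only [hh]; split <;> norm_num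
  have hh1 : ∀ i, h i ≤ 1 := fun i => by simp only [hh]; split <;> norm_num
  set H : ℝ := ∑ j, c j * h j with hH
  have hH0 : 0 ≤ H := Finset.sum_nonneg fun i _ => mul_nonneg (hc i) (hh0 i)
  have hH1 : H ≤ 1 := by
    rw [hH, ← hsum]
    exact Finset.sum_le_sum fun i _ => by nlinarith [hc i, hh1 i, hh0 i]
  have hw : ∀ i, 0 ≤ c i * (1 + κ * (h i - H)) := fun i => by
    nlinarith [hc i, hh0 i, mul_nonneg hκ0 (hh0 i), mul_nonneg hκ0 (sub_nonneg.2 hH1)]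
  have hch : ∀ w : Fin m → ℝ, ∑ i, c i * h i * (w i - ∑ j, c j * w j)
      = (∑ i, c i * h i * w i) - H * ∑ j, c j * w j := by
    intro w
    have e : ∑ i, c i * h i * (w i - ∑ j, c j * w j)
        = ∑ i, (c i * h i * w i - (c i * h i) * ∑ j, c j * w j) :=
      Finset.sum_congr rfl fun i _ => by ring
    rw [e, Finset.sum_sub_distrib, ← Finset.sum_mul, ← hH]
  have expand : ∀ w : Fin m → ℝ, ∑ i, (c i * (1 + κ * (h i - H))) * w i
      = ∑ i, c i * w i + κ * ∑ i, c i * h i * (w i - ∑ j, c j * w j) := by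
    intro w
    have e1 : ∑ i, (c i * (1 + κ * (h i - H))) * w i
        = ∑ i, (c i * w i + κ * (c i * h i * w i) - (κ * H) * (c i * w i)) :=
      Finset.sum_congr rfl fun i _ => by ring
    rw [e1, Finset.sum_sub_distrib, Finset.sum_add_distrib, ← Finset.mul_sum,
      ← Finset.mul_sum, hch w]
    ring
  have keyr : ∑ i, c i * h i * (r i - μr) = ∑ i, c i * max (r i - μr) 0 := by
    refine Finset.sum_congr rfl fun i _ => ?_
    by_cases hi : μr < r i
    · simp only [hh, if_pos hi]
      rw [max_eq_left (by linarith)]; ring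
    · simp only [hh, if_neg hi]
      rw [max_eq_right (by push_neg at hi; linarith)]; ring
  have keys : ∑ i, c i * h i * (s i - μs) ≤ ∑ i, c i * max (s i - μs) 0 := by
    refine Finset.sum_le_sum fun i _ => ?_
    rcases le_or_gt 0 (s i - μs) with hx | hx
    · rw [max_eq_left hx]
      nlinarith [mul_nonneg (mul_nonneg (hc i) (sub_nonneg.2 (hh1 i))) hx]
    · rw [max_eq_right (le_of_lt hx)]
      nlinarith [mul_nonneg (mul_nonneg (hc i) (hh0 i)) (neg_nonneg.2 hx.le)]
  have step1 : meanSemidevAgg κ c r = ∑ i, (c i * (1 + κ * (h i - H))) * r i := by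
    rw [expand r, ← hμr, keyr]; rfl
  have step2 : ∑ i, (c i * (1 + κ * (h i - H))) * s i ≤ meanSemidevAgg κ c s := by
    rw [expand s, ← hμs]
    have : κ * ∑ i, c i * h i * (s i - μs) ≤ κ * ∑ i, c i * max (s i - μs) 0 :=
      mul_le_mul_of_nonneg_left keys hκ0
    simpa [meanSemidevAgg, ← hμs] using add_le_add_left this (∑ i, c i * s i)
  calc meanSemidevAgg κ c r = ∑ i, (c i * (1 + κ * (h i - H))) * r i := step1
    _ ≤ ∑ i, (c i * (1 + κ * (h i - H))) * s i :=
        Finset.sum_le_sum fun i _ => mul_le_mul_of_nonneg_left (hrs i) (hw i)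
    _ ≤ meanSemidevAgg κ c s := step2

lemma agg_convex' {m : ℕ} (κ : ℝ) (c r s : Fin m → ℝ) (a b : ℝ)
    (hκ0 : 0 ≤ κ) (hc : ∀ i, 0 ≤ c i) (ha : 0 ≤ a) (hb : 0 ≤ b) :
    meanSemidevAgg κ c (fun i => a * r i + b * s i)
      ≤ a * meanSemidevAgg κ c r + b * meanSemidevAgg κ c s := by
  set μr := ∑ j, c j * r j with hμr
  set μs := ∑ j, c j * s j with hμs
  have hμ : ∑ j, c j * (a * r j + b * s j) = a * μr + b * μs := by
    rw [hμr, hμs, Finset.mul_sum, Finset.mul_sum, ← Finset.sum_add_distrib]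
    exact Finset.sum_congr rfl fun i _ => by ring
  have hmax : ∀ i, c i * max (a * r i + b * s i - (a * μr + b * μs)) 0
      ≤ a * (c i * max (r i - μr) 0) + b * (c i * max (s i - μs) 0) := by
    intro i
    have h1 : max (a * (r i - μr) + b * (s i - μs)) 0
        ≤ a * max (r i - μr) 0 + b * max (s i - μs) 0 := by
      apply max_le
      · exact add_le_add (mul_le_mul_of_nonneg_left (le_max_left _ _) ha)
          (mul_le_mul_of_nonneg_left (le_max_left _ _) hb)
      · have h2 := mul_nonneg ha (le_max_right (r i - μr) 0)
        have h3 := mul_nonneg hb (le_max_right (s i - μs) 0)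
        linarith
    have e : a * r i + b * s i - (a * μr + b * μs) = a * (r i - μr) + b * (s i - μs) := by ring
    rw [e]
    calc c i * max (a * (r i - μr) + b * (s i - μs)) 0
        ≤ c i * (a * max (r i - μr) 0 + b * max (s i - μs) 0) :=
          mul_le_mul_of_nonneg_left h1 (hc i)
      _ = a * (c i * max (r i - μr) 0) + b * (c i * max (s i - μs) 0) := by ring
  unfold meanSemidevAgg
  beta_reduce
  rw [← hμr, ← hμs, hμ]
  have hmaxsum : ∑ i, c i * max (a * r i + b * s i - (a * μr + b * μs)) 0
      ≤ a * ∑ i, c i * max (r i - μr) 0 + b * ∑ i, c i * max (s i - μs) 0 := by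
    calc ∑ i, c i * max (a * r i + b * s i - (a * μr + b * μs)) 0
        ≤ ∑ i, (a * (c i * max (r i - μr) 0) + b * (c i * max (s i - μs) 0)) := by
          apply Finset.sum_le_sum; intro i _; exact hmax i
      _ = a * ∑ i, c i * max (r i - μr) 0 + b * ∑ i, c i * max (s i - μs) 0 := by
          rw [Finset.sum_add_distrib, ← Finset.mul_sum, ← Finset.mul_sum]
  have hk := mul_le_mul_of_nonneg_left hmaxsum hκ0
  nlinarith [hk]

lemma agg_homog' {m : ℕ} (κ : ℝ) (c r : Fin m → ℝ) (t : ℝ) (ht : 0 ≤ t) :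
    meanSemidevAgg κ c (fun i => t * r i) = t * meanSemidevAgg κ c r := by
  set μr := ∑ j, c j * r j with hμr
  have hμ : ∑ j, c j * (t * r j) = t * μr := by
    rw [hμr, Finset.mul_sum]; exact Finset.sum_congr rfl fun i _ => by ring
  unfold meanSemidevAgg
  beta_reduce
  rw [← hμr, hμ]
  have h2 : ∑ i, c i * max (t * r i - t * μr) 0 = ∑ i, t * (c i * max (r i - μr) 0) := by
    refine Finset.sum_congr rfl fun i _ => ?_
    have e : t * r i - t * μr = t * (r i - μr) := by ring
    have e2 : max (t * (r i - μr)) 0 = t * max (r i - μr) 0 := by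
      rw [mul_max_of_nonneg _ _ ht, mul_zero]
    rw [e, e2]; ring
  rw [h2, ← Finset.mul_sum]; ring

lemma agg_trans' {m : ℕ} (κ : ℝ) (c r : Fin m → ℝ) (a : ℝ) (hsum : ∑ i, c i = 1) :
    meanSemidevAgg κ c (fun i => r i + a) = meanSemidevAgg κ c r + a := by
  set μr := ∑ j, c j * r j with hμr
  have hμ : ∑ j, c j * (r j + a) = μr + a := by
    have e : ∑ j, c j * (r j + a) = ∑ j, (c j * r j + c j * a) :=
      Finset.sum_congr rfl fun i _ => by ring
    rw [e, Finset.sum_add_distrib, ← Finset.sum_mul, hsum, ← hμr]; ring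
  unfold meanSemidevAgg
  beta_reduce
  rw [← hμr, hμ]
  have h2 : ∑ i, c i * max (r i + a - (μr + a)) 0 = ∑ i, c i * max (r i - μr) 0 :=
    Finset.sum_congr rfl fun i _ => by ring_nf
  rw [h2]; ring


/-- the systemic Mean-Semideviation measure
`ρ_s[X] = Σ_i c_i ρ[X_i] + κ Σ_i c_i (ρ[X_i] − Σ_j c_j ρ[X_j])_+`
with `ρ` a coherent scalar risk measure, `κ ∈ [0,1]`, `c ∈ S_m^+`,
satisfies axioms A1–A4. -/
theorem systemic_mean_semideviation_coherent
    {Ω : Type*} [MeasurableSpace Ω] {m : ℕ} {p : ℝ≥0∞}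
    (μ : Measure Ω) [IsProbabilityMeasure μ] [Fact (1 ≤ p)]
    (κ : ℝ) (hκ : κ ∈ Set.Icc (0 : ℝ) 1)
    
    (c : Fin m → ℝ) (hc : (∀ i, 0 ≤ c i) ∧ ∑ i, c i = 1)
    -- constant scalar random variables
    (K : ℝ → Lp ℝ p μ) (hK : ∀ a : ℝ, ∀ᵐ ω ∂μ, (K a) ω = a)
    -- the coherent scalar risk measure ρ
    (ρ : Lp ℝ p μ → ℝ)
    (hconvex : ∀ Z W : Lp ℝ p μ, ∀ a b : ℝ, 0 ≤ a → 0 ≤ b → a + b = 1 →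
      ρ (a • Z + b • W) ≤ a * ρ Z + b * ρ W)
    (hmono : ∀ Z W : Lp ℝ p μ, (∀ᵐ ω ∂μ, W ω ≤ Z ω) → ρ W ≤ ρ Z)
    (hhomog : ∀ (t : ℝ), 0 < t → ∀ Z, ρ (t • Z) = t * ρ Z)
    (htrans : ∀ (Z : Lp ℝ p μ) (a : ℝ), ρ (Z + K a) = ρ Z + a)
    -- components of random vectors
    (comp : Lp (EuclideanSpace ℝ (Fin m)) p μ → Fin m → Lp ℝ p μ)
    (hcomp : ∀ X i, ∀ᵐ ω ∂μ, (comp X i) ω = X ω i)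
    -- the all-ones constant random vector
    (I : Lp (EuclideanSpace ℝ (Fin m)) p μ) (hI : ∀ᵐ ω ∂μ, ∀ i, I ω i = 1) :
    (∀ X Y : Lp (EuclideanSpace ℝ (Fin m)) p μ, ∀ a b : ℝ,
      0 ≤ a → 0 ≤ b → a + b = 1 →
      meanSemidevAgg κ c (fun i => ρ (comp (a • X + b • Y) i)) ≤
        a * meanSemidevAgg κ c (fun i => ρ (comp X i)) +
          b * meanSemidevAgg κ c (fun i => ρ (comp Y i))) ∧
    (∀ X Y : Lp (EuclideanSpace ℝ (Fin m)) p μ,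
      (∀ᵐ ω ∂μ, ∀ i, Y ω i ≤ X ω i) →
      meanSemidevAgg κ c (fun i => ρ (comp Y i)) ≤
        meanSemidevAgg κ c (fun i => ρ (comp X i))) ∧
    (∀ (t : ℝ), 0 < t → ∀ X,
      meanSemidevAgg κ c (fun i => ρ (comp (t • X) i)) =
        t * meanSemidevAgg κ c (fun i => ρ (comp X i))) ∧
    (∀ (X : Lp (EuclideanSpace ℝ (Fin m)) p μ) (a : ℝ),
      meanSemidevAgg κ c (fun i => ρ (comp (X + a • I) i)) =
        meanSemidevAgg κ c (fun i => ρ (comp X i)) + a) := by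
  obtain ⟨hκ0, hκ1⟩ := hκ
  obtain ⟨hc0, hc1⟩ := hc
  have hcongr : ∀ Z W : MeasureTheory.Lp ℝ p μ, (∀ᵐ ω ∂μ, Z ω = W ω) → ρ Z = ρ W := by
    intro Z W h
    exact le_antisymm (hmono W Z (h.mono fun ω e => le_of_eq e))
      (hmono Z W (h.mono fun ω e => le_of_eq e.symm))
  refine ⟨?_, ?_, ?_, ?_⟩
  · -- A1: convexity
    intro X Y a b ha hb hab
    have hri : ∀ i, ρ (comp (a • X + b • Y) i) = ρ (a • comp X i + b • comp Y i) := by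
      intro i
      apply hcongr
      filter_upwards [hcomp (a • X + b • Y) i, hcomp X i, hcomp Y i,
        MeasureTheory.Lp.coeFn_add (a • X) (b • Y), MeasureTheory.Lp.coeFn_smul a X,
        MeasureTheory.Lp.coeFn_smul b Y,
        MeasureTheory.Lp.coeFn_add (a • comp X i) (b • comp Y i),
        MeasureTheory.Lp.coeFn_smul a (comp X i), MeasureTheory.Lp.coeFn_smul b (comp Y i)]
        with ω h1 h2 h3 h4 h5 h6 h7 h8 h9
      rw [h1, h7, h4]
      simp only [Pi.add_apply, Pi.smul_apply, h5, h6, h8, h9, smul_eq_mul,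
        PiLp.add_apply, PiLp.smul_apply]
      rw [h2, h3]
    have hle : ∀ i, ρ (comp (a • X + b • Y) i) ≤ a * ρ (comp X i) + b * ρ (comp Y i) := by
      intro i; rw [hri i]; exact hconvex _ _ a b ha hb hab
    calc meanSemidevAgg κ c (fun i => ρ (comp (a • X + b • Y) i))
        ≤ meanSemidevAgg κ c (fun i => a * ρ (comp X i) + b * ρ (comp Y i)) :=
          agg_mono' κ c _ _ hκ0 hκ1 hc0 hc1 hle
      _ ≤ a * meanSemidevAgg κ c (fun i => ρ (comp X i))
            + b * meanSemidevAgg κ c (fun i => ρ (comp Y i)) :=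
          agg_convex' κ c _ _ a b hκ0 hc0 ha hb
  · -- A2: monotonicity
    intro X Y hXY
    refine agg_mono' κ c _ _ hκ0 hκ1 hc0 hc1 fun i => ?_
    refine hmono (comp X i) (comp Y i) ?_
    filter_upwards [hcomp X i, hcomp Y i, hXY] with ω h1 h2 h3
    rw [h1, h2]; exact h3 i
  · -- A3: positive homogeneity
    intro t ht X
    have hri : ∀ i, ρ (comp (t • X) i) = t * ρ (comp X i) := by
      intro i
      have he : ρ (comp (t • X) i) = ρ (t • comp X i) := by
        apply hcongr
        filter_upwards [hcomp (t • X) i, hcomp X i, MeasureTheory.Lp.coeFn_smul t X,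
          MeasureTheory.Lp.coeFn_smul t (comp X i)] with ω h1 h2 h3 h4
        rw [h1, h3, h4]
        simp only [Pi.smul_apply, PiLp.smul_apply, smul_eq_mul, h2]
      rw [he, hhomog t ht]
    have hfn : (fun i => ρ (comp (t • X) i)) = fun i => t * ρ (comp X i) := funext hri
    rw [hfn]
    exact agg_homog' κ c _ t ht.le
  · -- A4: translation
    intro X a
    have hri : ∀ i, ρ (comp (X + a • I) i) = ρ (comp X i) + a := by
      intro i
      rw [← htrans (comp X i) a]
      apply hcongr
      filter_upwards [hcomp (X + a • I) i, hcomp X i, hI,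
        MeasureTheory.Lp.coeFn_add X (a • I), MeasureTheory.Lp.coeFn_smul a I,
        MeasureTheory.Lp.coeFn_add (comp X i) (K a), hK a] with ω h1 h2 h3 h4 h5 h6 h7
      rw [h1, h6]
      simp only [Pi.add_apply]
      rw [h2, h7, h4]
      simp only [Pi.add_apply, Pi.smul_apply, PiLp.add_apply, PiLp.smul_apply,
        smul_eq_mul, h5, h3 i, mul_one]
    have hfn : (fun i => ρ (comp (X + a • I) i)) = fun i => ρ (comp X i) + a := funext hri
    rw [hfn]
    exact agg_trans' κ c _ a hc1
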